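/- Let R = ℝ[t]/(t²) (the dual numbers over ℝ, with ε the class of t satisfying ε² = 0). The evolution algebra A over R with basis (x_i)_{i≥1} and relations x_i·x_i = ε•x_i + x_{i+1}, x_i·x_j = 0 for i ≠ j, is nil: for every a ∈ A there exists n ≥ 1 with a^n = 0; explicitly, if a(i) = 0 for i > t then a^{2t+2} = 0. (Example 3.4, part 1) -/
import Mathlib


/-!
Let `R = ℝ[t]/(t²)` be the ring of dual numbers over `ℝ` (`DualNumber ℝ` in
Mathlib), with `ε = DualNumber.eps` the class of `t`, so `ε ≠ 0` and `ε² = 0`.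
The evolution algebra `A` over `R` has basis `(x_i)_{i ≥ 1}` indexed by `ℕ+`
(underlying module `ℕ+ →₀ DualNumber ℝ`, `x_i = Finsupp.single i 1`) and
relations `x_i · x_i = ε•x_i + x_{i+1}`, `x_i · x_j = 0` for `i ≠ j`;
concretely `(a · b) = ∑_i a(i) * b(i) • (ε • x_i + x_{i+1})`.
-/
noncomputable def evolMul {R : Type*} [CommRing R] {ι : Type*}
    (Csq : ι → ι →₀ R) (a b : ι →₀ R) : ι →₀ R :=
  a.sum fun i ai => (ai * b i) • Csq i

/-- The squares of the basis elements: `x_i · x_i = ε • x_i + x_{i+1}`. -/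
noncomputable def sqD : ℕ+ → (ℕ+ →₀ DualNumber ℝ) := fun i =>
  (DualNumber.eps : DualNumber ℝ) • Finsupp.single i (1 : DualNumber ℝ) + Finsupp.single (i + 1) 1

/-- Principal powers: `ppow mul a n = aⁿ` for `n ≥ 1`, defined by
`a^1 = a` and `a^{n+1} = a^n · a`. -/
def ppow {A : Type*} (mul : A → A → A) (a : A) : ℕ → A
  | 0 => a
  | 1 => a
  | n + 2 => mul (ppow mul a (n + 1)) a

open DualNumber TrivSqZeroExt

lemma pnat_succ_ne_one (i : ℕ+) : i + 1 ≠ 1 := by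
  intro h
  have h' : ((i + 1 : ℕ+) : ℕ) = ((1 : ℕ+) : ℕ) := congrArg _ h
  rw [PNat.add_coe, PNat.one_coe] at h'
  have := i.pos
  omega

lemma pnat_succ_inj {i j : ℕ+} : i + 1 = j + 1 ↔ i = j := by
  constructor
  · intro h
    have h' : ((i + 1 : ℕ+) : ℕ) = ((j + 1 : ℕ+) : ℕ) := congrArg _ h
    rw [PNat.add_coe, PNat.add_coe] at h'
    exact PNat.coe_injective (by omega)
  · rintro rfl; rfl

lemma evolMul_apply_one (a b : ℕ+ →₀ DualNumber ℝ) :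
    evolMul sqD a b 1 = (a 1 * b 1) * ε := by
  classical
  rw [evolMul, Finsupp.sum_apply]
  have key : ∀ i : ℕ+, ∀ ai : DualNumber ℝ,
      ((ai * b i) • sqD i) 1 = if i = 1 then (ai * b i) * ε else 0 := by
    intro i ai
    simp only [sqD, Finsupp.smul_apply, Finsupp.add_apply, Finsupp.single_apply,
      if_neg (pnat_succ_ne_one i), smul_eq_mul]
    split <;> ring
  simp_rw [key]
  rw [Finsupp.sum_ite_eq']
  split
  · rfl
  · next h => simp [Finsupp.notMem_support_iff.mp h]

lemma evolMul_apply_succ (a b : ℕ+ →₀ DualNumber ℝ) (j : ℕ+) :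
    evolMul sqD a b (j + 1) = (a (j+1) * b (j+1)) * ε + a j * b j := by
  classical
  rw [evolMul, Finsupp.sum_apply]
  have hne : (j + 1 : ℕ+) ≠ j := by
    intro h
    have h' : ((j + 1 : ℕ+) : ℕ) = (j : ℕ) := congrArg _ h
    rw [PNat.add_coe, PNat.one_coe] at h'
    omega
  have key : ∀ i : ℕ+, ∀ ai : DualNumber ℝ,
      ((ai * b i) • sqD i) (j+1) = (if i = j + 1 then (ai * b i) * ε else 0)
        + (if i = j then (ai * b i) else 0) := by
    intro i ai
    simp only [sqD, Finsupp.smul_apply, Finsupp.add_apply, Finsupp.single_apply,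
      pnat_succ_inj, smul_eq_mul]
    rcases eq_or_ne i (j + 1) with rfl | h1
    · rw [if_pos rfl, if_pos rfl, if_neg hne, if_neg hne]; ring
    · rcases eq_or_ne i j with rfl | h2
      · rw [if_neg h1, if_pos rfl, if_neg h1, if_pos rfl]; ring
      · rw [if_neg h1, if_neg h2, if_neg h1, if_neg h2]; ring
  simp_rw [key]
  rw [Finsupp.sum_add, Finsupp.sum_ite_eq', Finsupp.sum_ite_eq']
  congr 1
  · split
    · rfl
    · next h => simp [Finsupp.notMem_support_iff.mp h]
  · split
    · rfl
    · next h => simp [Finsupp.notMem_support_iff.mp h]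

lemma dn_mul_eps (x : DualNumber ℝ) (h : x.fst = 0) : x * ε = 0 := by
  apply TrivSqZeroExt.ext <;> simp [h]

section main
variable (t : ℕ) (a : ℕ+ →₀ DualNumber ℝ) (ha : ∀ i : ℕ+, t < (i : ℕ) → a i = 0)

local notation "c" => ppow (evolMul sqD) a

include ha in
lemma suppB : ∀ n : ℕ, ∀ j : ℕ+, t + 1 < (j:ℕ) → c n j = 0 := by
  intro n
  induction n with
  | zero => exact fun j hj => ha j (by omega)
  | succ n ih =>
    cases n with
    | zero => exact fun j hj => ha j (by omega)
    | succ m =>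
      intro j hj
      obtain ⟨j', rfl⟩ := PNat.exists_eq_succ_of_ne_one (n := j)
        (by intro h; rw [h, PNat.one_coe] at hj; omega)
      rw [PNat.add_coe, PNat.one_coe] at hj
      rw [show c (m+2) = evolMul sqD (c (m+1)) a from rfl, evolMul_apply_succ]
      rw [ha (j'+1) (by rw [PNat.add_coe, PNat.one_coe]; omega), ha j' (by omega)]
      ring

omit ha in
lemma fstB : ∀ m : ℕ, ∀ j : ℕ+, (j:ℕ) ≤ m → (c (m+1) j).fst = 0 := by
  intro m
  induction m with
  | zero => intro j hj; exact absurd hj (by have := j.pos; omega)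
  | succ m ih =>
    intro j hj
    rcases eq_or_ne j 1 with rfl | hne
    · rw [show c (m+2) = evolMul sqD (c (m+1)) a from rfl, evolMul_apply_one]
      simp
    · obtain ⟨j', rfl⟩ := PNat.exists_eq_succ_of_ne_one hne
      rw [PNat.add_coe, PNat.one_coe] at hj
      rw [show c (m+2) = evolMul sqD (c (m+1)) a from rfl, evolMul_apply_succ]
      simp [ih j' (by omega)]

omit ha in
lemma zeroB : ∀ m : ℕ, ∀ j : ℕ+, (j:ℕ) + 1 ≤ m → c (m+1) j = 0 := by
  intro m
  induction m with
  | zero => intro j hj; exact absurd hj (by have := j.pos; omega)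
  | succ m ih =>
    intro j hj
    rcases eq_or_ne j 1 with rfl | hne
    · rw [PNat.one_coe] at hj
      rw [show c (m+2) = evolMul sqD (c (m+1)) a from rfl, evolMul_apply_one]
      refine dn_mul_eps _ ?_
      rw [fst_mul, fstB a m 1 (by rw [PNat.one_coe]; omega), zero_mul]
    · obtain ⟨j', rfl⟩ := PNat.exists_eq_succ_of_ne_one hne
      rw [PNat.add_coe, PNat.one_coe] at hj
      rw [show c (m+2) = evolMul sqD (c (m+1)) a from rfl, evolMul_apply_succ]
      rw [dn_mul_eps _ (by rw [fst_mul,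
            fstB a m (j'+1) (by rw [PNat.add_coe, PNat.one_coe]; omega), zero_mul]),
        ih j' (by omega)]
      ring

end main

lemma evolMul_zero_left (b : ℕ+ →₀ DualNumber ℝ) : evolMul sqD 0 b = 0 := by
  simp [evolMul]

lemma key_nil : ∀ (t : ℕ) (a : ℕ+ →₀ DualNumber ℝ), (∀ i : ℕ+, t < (i : ℕ) → a i = 0) →
    ppow (evolMul sqD) a (2 * t + 2) = 0 := by
  intro t a ha
  cases t with
  | zero =>
    have h0 : a = 0 := Finsupp.ext fun i => ha i i.pos
    show evolMul sqD (ppow (evolMul sqD) a 1) a = 0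
    rw [show ppow (evolMul sqD) a 1 = a from rfl, h0, evolMul_zero_left]
  | succ s =>
    apply Finsupp.ext
    intro j
    rcases le_or_gt (j:ℕ) (s + 2) with hle | hlt
    · have : ppow (evolMul sqD) a (2 * (s+1) + 1 + 1) j = 0 :=
        zeroB a (2 * (s+1) + 1) j (by omega)
      simpa using this
    · simpa using suppB (s+1) a ha (2 * (s+1) + 2) j (by omega)

/-- Example 3.4, part 1: The evolution algebra over the dual
numbers `R = ℝ[t]/(t²)` with `x_i·x_i = ε•x_i + x_{i+1}` is nil: explicitly,
if `a i = 0` for `i > t` then `a^{2t+2} = 0`, and every `a` has some vanishing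
principal power `aⁿ = 0` with `n ≥ 1`. -/
theorem example_dual_numbers_nil :
    (∀ (t : ℕ) (a : ℕ+ →₀ DualNumber ℝ), (∀ i : ℕ+, t < (i : ℕ) → a i = 0) →
        ppow (evolMul sqD) a (2 * t + 2) = 0) ∧
    (∀ a : ℕ+ →₀ DualNumber ℝ, ∃ n : ℕ, 1 ≤ n ∧ ppow (evolMul sqD) a n = 0) := by
  refine ⟨key_nil, fun a => ?_⟩
  classical
  set T := a.support.sup fun i => (i:ℕ) with hT
  refine ⟨2 * T + 2, by omega, key_nil T a fun i hi => ?_⟩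
  by_contra h
  have hmem : i ∈ a.support := Finsupp.mem_support_iff.mpr h
  have h2 : (i:ℕ) ≤ T := Finset.le_sup (f := fun i : ℕ+ => (i:ℕ)) hmem
  omega
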